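/- arXiv:1906.07105 — 4 statements merged into one kernel-verified Lean document; each statement's English description precedes it below -/
import Mathlib

section
/- Consider a Markov chain on states {0,1,...,K} with transition probabilities: from state i with 0<i<K, move to i+1 with probability 1/2 and to i-1 with probability 1/2; from state K move to state K-l with probability 1/2 and to K-1 with probability 1/2; from state 0 move to state l with probability 1/2 and to state 1 with probability 1/2, where 1 ≤ l ≤ K-l. Then the vector π with π_i = (i+1)/((l+1)(K+1-l)) for i < l, π_i = (l+1)/((l+1)(K+1-l)) for l ≤ i ≤ K-l, and π_i = (K-i+1)/((l+1)(K+1-l)) for i > K-l, is a stationary distribution: it is nonnegative, sums to 1, and satisfies π P = π. -/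
/-!
Up to the normalising constant `(l + 1) * (K + 1 - l)`, `π` is the tent `min (i + 1, l + 1, K - i + 1)`.
It is piecewise linear, so away from its two kinks at `l` and `K - l` each state receives
`(π (j - 1) + π (j + 1)) / 2 = π j`; at a kink the average falls short by half a unit, and this is
exactly what the jumps `0 → l` and `K → K - l` bring in, since `π 0 = π K` is one unit. The end
states receive `π 1 / 2 = π 0` and `π (K - 1) / 2 = π K`.
-/

open Finset

theorem Finset.sum_ite_eq_of_iff {ι M : Type*} [AddCommMonoid M] {s : Finset ι}
    {p : ι → Prop} [DecidablePred p] {q : Prop} [Decidable q] {a : ι}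
    (h : ∀ i, p i ↔ i = a ∧ q) (ha : q → a ∈ s) (f : ι → M) :
    ∑ i ∈ s, (if p i then f i else 0) = if q then f a else 0 := by
  by_cases hq : q
  · rw [sum_eq_single_of_mem a (ha hq) fun i _ hia => if_neg fun hpi => hia ((h i).1 hpi).1,
      if_pos ((h a).2 ⟨rfl, hq⟩), if_pos hq]
  · exact (sum_eq_zero fun i _ => if_neg fun hpi => hq ((h i).1 hpi).2).trans (if_neg hq).symm

namespace StationaryJumpChain

/-- The numerator of `π i` written as a tent; it agrees with the piecewise formula for
`2 * l ≤ K` and `i ≤ K` (`cast_weight`). -/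
def weight (K l i : ℕ) : ℕ :=
  min (min (i + 1) (l + 1)) (K - i + 1)

def transition (K l i j : ℕ) : ℚ :=
  (if 0 < i ∧ i < K ∧ j = i + 1 then (1 : ℚ)/2 else 0) +
  (if 0 < i ∧ i < K ∧ j = i - 1 then (1 : ℚ)/2 else 0) +
  (if i = K ∧ j = K - l then (1 : ℚ)/2 else 0) +
  (if i = K ∧ j = K - 1 then (1 : ℚ)/2 else 0) +
  (if i = 0 ∧ j = l then (1 : ℚ)/2 else 0) +
  (if i = 0 ∧ j = 1 then (1 : ℚ)/2 else 0)

variable {K l : ℕ}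

theorem cast_weight (hlK : 2 * l ≤ K) {i : ℕ} (hi : i ≤ K) :
    (weight K l i : ℚ) =
      if i < l then (i : ℚ) + 1 else if i ≤ K - l then (l : ℚ) + 1 else (K : ℚ) - i + 1 := by
  split_ifs
  · rw [show weight K l i = i + 1 by unfold weight; omega]
    push_cast; rfl
  · rw [show weight K l i = l + 1 by unfold weight; omega]
    push_cast; rfl
  · rw [show weight K l i = K - i + 1 by unfold weight; omega]
    push_cast [hi]; rfl

theorem sum_weight (hlK : 2 * l ≤ K) :
    ∑ i ∈ range (K + 1), weight K l i = (l + 1) * (K + 1 - l) := by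
  obtain ⟨n, rfl⟩ := Nat.exists_eq_add_of_le hlK
  have hleft (x : ℕ) (hx : x ∈ range l) : weight (2 * l + n) l x = x + 1 := by
    have := mem_range.1 hx
    unfold weight; omega
  have hmid (x : ℕ) (hx : x ∈ range (n + 1)) : weight (2 * l + n) l (l + x) = l + 1 := by
    have := mem_range.1 hx
    unfold weight; omega
  have hright (x : ℕ) (hx : x ∈ range l) :
      weight (2 * l + n) l (l + (n + 1) + x) = l - x := by
    have := mem_range.1 hx
    unfold weight; omega
  rw [show 2 * l + n + 1 = l + (n + 1) + l by ring, sum_range_add, sum_range_add,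
    sum_congr rfl hleft, sum_congr rfl hmid, sum_congr rfl hright, add_right_comm,
    ← sum_add_distrib, sum_congr rfl fun x hx => show x + 1 + (l - x) = l + 1 by
      have := mem_range.1 hx; omega]
  simp only [sum_const, card_range, smul_eq_mul, Nat.add_sub_cancel]
  ring

theorem weight_zero : weight K l 0 = 1 := by
  unfold weight; omega

theorem weight_self : weight K l K = 1 := by
  unfold weight; omega

theorem weight_balance (hl : 1 ≤ l) (hlK : 2 * l ≤ K) {j : ℕ} (hj : j ≤ K) :
    (if 2 ≤ j then weight K l (j - 1) else 0) + (if j + 1 < K then weight K l (j + 1) else 0) +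
      (if j = K - l then weight K l K else 0) + (if j + 1 = K then weight K l K else 0) +
      (if j = l then weight K l 0 else 0) + (if j = 1 then weight K l 0 else 0) =
      2 * weight K l j := by
  rw [weight_zero, weight_self]
  unfold weight
  split_ifs <;> omega

theorem sum_mul_transition (f : ℕ → ℚ) (hK : 0 < K) {j : ℕ} (hj : j ≤ K) :
    ∑ i ∈ range (K + 1), f i * transition K l i j =
      ((if 2 ≤ j then f (j - 1) else 0) + (if j + 1 < K then f (j + 1) else 0) +
        (if j = K - l then f K else 0) + (if j + 1 = K then f K else 0) +
        (if j = l then f 0 else 0) + (if j = 1 then f 0 else 0)) / 2 := by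
  simp only [transition, mul_add, mul_ite, mul_zero, sum_add_distrib]
  rw [sum_ite_eq_of_iff (a := j - 1) (q := 2 ≤ j) (by omega) fun _ => mem_range.2 (by omega),
    sum_ite_eq_of_iff (a := j + 1) (q := j + 1 < K) (by omega) fun _ => mem_range.2 (by omega),
    sum_ite_eq_of_iff (a := K) (q := j = K - l) (by omega) (by simp),
    sum_ite_eq_of_iff (a := K) (q := j + 1 = K) (by omega) (by simp),
    sum_ite_eq_of_iff (a := 0) (q := j = l) (by omega) (by simp),
    sum_ite_eq_of_iff (a := 0) (q := j = 1) (by omega) (by simp)]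
  simp only [add_div, ite_div, zero_div, mul_one_div]

theorem sum_weight_mul_transition (hl : 1 ≤ l) (hlK : 2 * l ≤ K) {j : ℕ} (hj : j ≤ K) :
    ∑ i ∈ range (K + 1), (weight K l i : ℚ) * transition K l i j = weight K l j := by
  have hbalance := congrArg (Nat.cast : ℕ → ℚ) (weight_balance hl hlK hj)
  push_cast at hbalance
  rw [sum_mul_transition _ (by omega) hj, hbalance]
  ring

end StationaryJumpChain

/-- Lemma 1 of the 2D framework: the explicit piecewise vector is a stationary
distribution of the Markov chain with `p = 1/2` and jump parameter `l`. -/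
theorem stmt_0 (K l : ℕ) (hl : 1 ≤ l) (hlK : 2 * l ≤ K)
    (π : ℕ → ℚ) (P : ℕ → ℕ → ℚ)
    (hπ : ∀ i, π i =
      (if i < l then (i : ℚ) + 1
       else if i ≤ K - l then (l : ℚ) + 1
       else (K : ℚ) - i + 1) / (((l : ℚ) + 1) * ((K : ℚ) + 1 - l)))
    (hP : ∀ i j, P i j =
      (if 0 < i ∧ i < K ∧ j = i + 1 then (1 : ℚ)/2 else 0) +
      (if 0 < i ∧ i < K ∧ j = i - 1 then (1 : ℚ)/2 else 0) +
      (if i = K ∧ j = K - l then (1 : ℚ)/2 else 0) +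
      (if i = K ∧ j = K - 1 then (1 : ℚ)/2 else 0) +
      (if i = 0 ∧ j = l then (1 : ℚ)/2 else 0) +
      (if i = 0 ∧ j = 1 then (1 : ℚ)/2 else 0)) :
    (∀ i, i ≤ K → 0 ≤ π i) ∧
    (∑ i ∈ Finset.range (K + 1), π i = 1) ∧
    (∀ j, j ≤ K → ∑ i ∈ Finset.range (K + 1), π i * P i j = π j) := by
  set Z : ℚ := ((l : ℚ) + 1) * ((K : ℚ) + 1 - l)
  have hZ : ((l + 1) * (K + 1 - l) : ℕ) = Z := by push_cast [show l ≤ K + 1 by omega]; rfl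
  have hZpos : 0 < Z := by
    have : (l : ℚ) ≤ K := by exact_mod_cast (by omega : l ≤ K)
    exact mul_pos (by positivity) (by linarith)
  have hπw : ∀ i ∈ range (K + 1), π i = StationaryJumpChain.weight K l i / Z := fun i hi => by
    rw [hπ, StationaryJumpChain.cast_weight hlK (Nat.le_of_lt_succ (mem_range.1 hi))]
  obtain rfl : P = StationaryJumpChain.transition K l := funext fun i => funext (hP i)
  refine ⟨fun i hi => ?_, ?_, fun j hj => ?_⟩
  · rw [hπw i (mem_range.2 (Nat.lt_succ_of_le hi))]
    positivity
  · rw [sum_congr rfl hπw, ← sum_div, ← Nat.cast_sum, StationaryJumpChain.sum_weight hlK, hZ,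
      div_self hZpos.ne']
  · rw [sum_congr rfl fun i hi => by rw [hπw i hi, div_mul_eq_mul_div], ← sum_div,
      StationaryJumpChain.sum_weight_mul_transition hl hlK hj,
      hπw j (mem_range.2 (Nat.lt_succ_of_le hj))]
end

section
/- The entries π^l_i = (min(i, l, K-i) + 1)/((l+1)(K+1-l)) for i = 0,...,K sum to 1, provided 1 ≤ l and 2l ≤ K. -/
/-!
The numerators `min(i, l, K - i) + 1` rise as `1, 2, …, l` on the first `l` indices, stay at
`l + 1` on the `K + 1 - 2l` middle ones and fall as `l, …, 1` on the last `l`. The two slopes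
together contribute `l (l + 1)`, so the total is `(l + 1)(K + 1 - l)`, the denominator.
-/

open Finset

lemma sum_range_add_one_mul_two (n : ℕ) : (∑ i ∈ range n, (i + 1)) * 2 = n * (n + 1) := by
  induction n with
  | zero => simp
  | succ n ih => rw [sum_range_succ, add_mul, ih]; ring

lemma sum_range_min_min_add_one {K l : ℕ} (h : 2 * l ≤ K + 1) :
    ∑ i ∈ range (K + 1), (min i (min l (K - i)) + 1) = (l + 1) * (K + 1 - l) := by
  obtain ⟨m, hm⟩ : ∃ m, K + 1 = l + m + l := ⟨K + 1 - 2 * l, by omega⟩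
  have rising : ∑ i ∈ range l, (min i (min l (K - i)) + 1) = ∑ i ∈ range l, (i + 1) :=
    sum_congr rfl fun i hi => by simp only [mem_range] at hi; omega
  have flat : ∑ i ∈ range m, (min (l + i) (min l (K - (l + i))) + 1) = m * (l + 1) := by
    rw [sum_congr rfl fun i hi => (by simp only [mem_range] at hi; omega : _ = l + 1), sum_const,
      card_range, smul_eq_mul]
  have falling : ∑ i ∈ range l, (min (l + m + i) (min l (K - (l + m + i))) + 1) =
      ∑ i ∈ range l, (i + 1) := by
    rw [← sum_range_reflect]
    exact sum_congr rfl fun i hi => by simp only [mem_range] at hi; omega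
  have slopes := sum_range_add_one_mul_two l
  rw [hm, sum_range_add, sum_range_add, rising, flat, falling, show l + m + l - l = l + m by omega]
  linear_combination slopes

theorem stmt_3_general (K l : ℕ) (hlK : 2 * l ≤ K) :
    ∑ i ∈ Finset.range (K + 1),
      ((min i (min l (K - i)) : ℚ) + 1) / (((l : ℚ) + 1) * ((K : ℚ) + 1 - l)) = 1 := by
  have hlK' : (l : ℚ) < K + 1 := by exact_mod_cast (show l < K + 1 by omega)
  have hD : ((l : ℚ) + 1) * ((K : ℚ) + 1 - l) ≠ 0 := by positivity
  -- The ascription `: ℚ` elaborates `K - i` as a subtraction in `ℚ`; it agrees with `ℕ` for `i ≤ K`.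
  have hcast : ∑ i ∈ range (K + 1), ((min i (min l (K - i)) : ℚ) + 1) =
      ((∑ i ∈ range (K + 1), (min i (min l (K - i)) + 1) : ℕ) : ℚ) := by
    push_cast
    exact sum_congr rfl fun i hi => by
      rw [Nat.cast_sub (by simp only [mem_range] at hi; omega)]
  rw [← sum_div, div_eq_one_iff_eq hD, hcast, sum_range_min_min_add_one (by omega),
    Nat.cast_mul, Nat.cast_sub (by omega)]
  push_cast
  ring

/-- The entries of the stationary distribution sum to one. -/
theorem stmt_3 (K l : ℕ) (hl : 1 ≤ l) (hlK : 2 * l ≤ K) :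
    ∑ i ∈ Finset.range (K + 1),
      ((min i (min l (K - i)) : ℚ) + 1) / (((l : ℚ) + 1) * ((K : ℚ) + 1 - l)) = 1 :=
  stmt_3_general K l hlK
end

section
/- Let depth, width be positive naturals, K = depth·width, and p ∈ [0,1]. Define E = ∑_{f=0}^{width-1} (width/(width-f)) · (2p/(K+1)). Then E ≤ (ln(width) + 1)·(1/depth)·2p. In particular, with p = 1/2, the expected number of hops of a Put operation is at most (ln(width) + 1)/depth. -/
/-! Reversing the order of summation turns `∑_{f<n} n/(n-f)` into `n·Hₙ`, and `Hₙ ≤ 1 + log n`.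
Since `K + 1 > depth·width`, the factor `width/(K+1)` is at most `1/depth`. -/

open Finset

theorem sum_range_div_sub_eq_mul_harmonic (n : ℕ) :
    ∑ f ∈ range n, (n : ℝ) / ((n : ℝ) - f) = n * harmonic n := by
  rw [← sum_range_reflect, harmonic, Rat.cast_sum, mul_sum]
  refine sum_congr rfl fun j hj => ?_
  have hj : j + 1 ≤ n := mem_range.mp hj
  rw [Nat.cast_sub (by omega), Nat.cast_sub (by omega)]
  push_cast
  rw [div_eq_mul_inv]
  ring_nf

theorem natCast_div_mul_add_one_le {d : ℕ} (hd : 0 < d) (n : ℕ) :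
    (n : ℝ) / ((d * n : ℕ) + 1) ≤ 1 / d := by
  have hd' : (0 : ℝ) < d := by exact_mod_cast hd
  rw [div_le_div_iff₀ (by positivity) hd']
  push_cast
  linarith

theorem stmt_5_general (depth width : ℕ) (hd : 1 ≤ depth)
    (K : ℕ) (hK : K = depth * width) (p : ℝ) (hp0 : 0 ≤ p) :
    ∑ f ∈ Finset.range width,
        ((width : ℝ) / ((width : ℝ) - (f : ℝ))) * (2 * p / ((K : ℝ) + 1)) ≤
      (Real.log width + 1) * (1 / (depth : ℝ)) * (2 * p) := by
  have h2p : 0 ≤ 2 * p := by linarith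
  rw [← sum_mul, sum_range_div_sub_eq_mul_harmonic, hK]
  calc (width : ℝ) * harmonic width * (2 * p / ((depth * width : ℕ) + 1))
      = harmonic width * ((width : ℝ) / ((depth * width : ℕ) + 1)) * (2 * p) := by ring
    _ ≤ (Real.log width + 1) * (1 / (depth : ℝ)) * (2 * p) := by
        gcongr ?_ * ?_ * _
        · linarith [harmonic_le_one_add_log width]
        · exact natCast_div_mul_add_one_le hd width

/-- Bound on the expected number of hops of a `Put` operation:
`E = ∑_{f<width} (width/(width-f))·(2p/(K+1)) ≤ (ln width + 1)·(1/depth)·2p`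
where `K = depth·width`. -/
theorem stmt_5 (depth width : ℕ) (hd : 1 ≤ depth) (hw : 1 ≤ width)
    (K : ℕ) (hK : K = depth * width) (p : ℝ) (hp0 : 0 ≤ p) (hp1 : p ≤ 1) :
    ∑ f ∈ Finset.range width,
        ((width : ℝ) / ((width : ℝ) - (f : ℝ))) * (2 * p / ((K : ℝ) + 1)) ≤
      (Real.log width + 1) * (1 / (depth : ℝ)) * (2 * p) :=
  stmt_5_general depth width hd K hK p hp0
end

section
/- Let depth, width be positive naturals and K = depth·width. With the uniform distribution π_i = 1/K on states {1,...,K}, and expected hop count width/(width - f) in the state i = (f+1)·depth for f = 0,...,width-1 (and 0 in all other states), the overall expected number of hops ∑_{f=0}^{width-1} (1/K)·(width/(width-f)) is at most (ln(width) + 1)/depth. -/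
open Finset

theorem sum_range_inv_natCast_sub_eq_harmonic (n : ℕ) :
    ∑ f ∈ range n, ((n : ℝ) - f)⁻¹ = harmonic n := by
  rw [harmonic, ← sum_range_reflect]
  push_cast
  refine sum_congr rfl fun f hf => ?_
  rw [Nat.cast_sub (by grind), Nat.cast_sub (by grind)]
  ring_nf

theorem natCast_div_mul_le_one_div (m n : ℕ) : (n : ℝ) / (m * n) ≤ 1 / m := by
  rcases eq_or_ne n 0 with rfl | hn
  · simp
  · rw [div_mul_cancel_right₀ (Nat.cast_ne_zero.mpr hn), one_div]

theorem stmt_14_general (depth width : ℕ)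
    (K : ℕ) (hK : K = depth * width) :
    ∑ f ∈ Finset.range width,
        (1 / (K : ℝ)) * ((width : ℝ) / ((width : ℝ) - (f : ℝ))) ≤
      (Real.log width + 1) / (depth : ℝ) := by
  calc ∑ f ∈ range width, (1 / (K : ℝ)) * ((width : ℝ) / ((width : ℝ) - (f : ℝ)))
      = (width : ℝ) / K * ∑ f ∈ range width, ((width : ℝ) - f)⁻¹ := by
        rw [mul_sum]
        exact sum_congr rfl fun f _ => by ring
    _ = (width : ℝ) / (depth * width) * harmonic width := by
        rw [sum_range_inv_natCast_sub_eq_harmonic, hK, Nat.cast_mul]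
    _ ≤ 1 / depth * (1 + Real.log width) := by
        exact mul_le_mul (natCast_div_mul_le_one_div depth width)
          (harmonic_le_one_add_log width) (by rw [harmonic]; positivity) (by positivity)
    _ = (Real.log width + 1) / depth := by ring

/-- 2Dd-Queue step complexity: the overall expected number of hops is at most
`(ln width + 1)/depth`, where `K = depth·width`. -/
theorem stmt_14 (depth width : ℕ) (hd : 1 ≤ depth) (hw : 1 ≤ width)
    (K : ℕ) (hK : K = depth * width) :
    ∑ f ∈ Finset.range width,
        (1 / (K : ℝ)) * ((width : ℝ) / ((width : ℝ) - (f : ℝ))) ≤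
      (Real.log width + 1) / (depth : ℝ) :=
  stmt_14_general depth width K hK
end
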